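/- arXiv:2409.13269 — 3 statements merged into one kernel-verified Lean document; each statement's English description precedes it below -/
import Mathlib

section
/- Comparison principle for the non-local Eikonal equation: under assumptions (H1)–(H3) and (H9), if f^ε : M̃ × [0,T) → ℝ is a bounded, upper semicontinuous (in t) viscosity sub-solution of the non-local problem (P_ε) in M̃_T and g^ε : M̃ × [0,T) → ℝ is a lower semicontinuous (in t) viscosity super-solution of (P_ε) in M̃_T, then f^ε(x,t) ≤ g^ε(x,t) for all (x,t) ∈ M̃ × [0,T). -/
/-- The weighted directional internal gradient operator
`|∇⁻_{η_ε} f (x,t)|_∞ = max_{y ∈ M̃} J(x,y) (f(x,t) - f(y,t))`,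
where the maximum is taken over the finite set `Mt`. -/
noncomputable def nonlocalGrad {M : Type*} {τ : Type*} (Mt : Finset M) (hMt : Mt.Nonempty)
    (J : M → M → ℝ) (f : M → τ → ℝ) (x : M) (t : τ) : ℝ :=
  Mt.sup' hMt fun y => J x y * (f x t - f y t)

/-- The `ε`-scaled kernel `J_ε(x,y) = C_η⁻¹ ε⁻¹ η(d̃(x,y)/ε)`. -/
noncomputable def Jker {M : Type*} (η : ℝ → ℝ) (Cη ε : ℝ) (dt : M → M → ℝ)
    (x y : M) : ℝ :=
  Cη⁻¹ * (ε⁻¹ * η (dt x y / ε))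

/-- Viscosity sub-solution of the non-local problem (P_ε) in `M̃_T`. -/
def IsNonlocalSubSol {M : Type*} (Mt Γt : Finset M) (hMt : Mt.Nonempty) (J : M → M → ℝ)
    (Pt f0 : M → ℝ) (T : ℝ) (f : M → ℝ → ℝ) : Prop :=
  (∀ x ∈ Mt, x ∉ Γt → ∀ t₀ ∈ Set.Ioo (0:ℝ) T, ∀ φ : ℝ → ℝ,
      ContDiff ℝ 1 φ → IsLocalMax (fun s => f x s - φ s) t₀ →
      deriv φ t₀ + nonlocalGrad Mt hMt J f x t₀ ≤ Pt x) ∧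
  (∀ x ∈ Γt, ∀ t ∈ Set.Ioo (0:ℝ) T, f x t ≤ f0 x) ∧
  (∀ x ∈ Mt, f x 0 ≤ f0 x)

/-- Viscosity super-solution of the non-local problem (P_ε) in `M̃_T`. -/
def IsNonlocalSuperSol {M : Type*} (Mt Γt : Finset M) (hMt : Mt.Nonempty) (J : M → M → ℝ)
    (Pt f0 : M → ℝ) (T : ℝ) (f : M → ℝ → ℝ) : Prop :=
  (∀ x ∈ Mt, x ∉ Γt → ∀ t₀ ∈ Set.Ioo (0:ℝ) T, ∀ φ : ℝ → ℝ,
      ContDiff ℝ 1 φ → IsLocalMin (fun s => f x s - φ s) t₀ →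
      Pt x ≤ deriv φ t₀ + nonlocalGrad Mt hMt J f x t₀) ∧
  (∀ x ∈ Γt, ∀ t ∈ Set.Ioo (0:ℝ) T, f0 x ≤ f x t) ∧
  (∀ x ∈ Mt, f0 x ≤ f x 0)

/-!
Doubling of the time variable. If `f x₁ t₁ > g x₁ t₁`, maximize `f x t - g x s - Φ (t, s)`,
with `Φ (t, s) = (t - s)² / (2δ) + β t + β s`, over `x ∈ M̃` and `t, s ∈ [0, T₂]`, where
`t₁ < T₂ < T` and the barrier `β` has positive slope, is small at `t₁` and exceeds the
oscillation of `f - g` at `T₂`. Semicontinuity at time `0` together with a small `δ` keeps the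
maximum away from the initial time, the boundary data keep it off `Γ̃`, and the barrier keeps it
off `T₂`. At the interior maximum `(x₀, t₀, s₀)`, testing `f x₀` with `t ↦ Φ (t, s₀)` and `g x₀`
with `s ↦ -Φ (t₀, s)` and subtracting gives `β' t₀ + β' s₀ ≤ 0`: the nonlocal terms drop out
because maximality in `x` gives `g x₀ s₀ - g y s₀ ≤ f x₀ t₀ - f y t₀` and the kernel is
nonnegative.
-/

open Filter Set Topology

section Semicontinuity

variable {α β : Type*} [TopologicalSpace α] [TopologicalSpace β]

theorem UpperSemicontinuousOn.fst_sub_snd_sub {F : α → ℝ} {G : β → ℝ} {Φ : α × β → ℝ}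
    {s : Set α} {s' : Set β} (hF : UpperSemicontinuousOn F s) (hG : LowerSemicontinuousOn G s')
    (hΦ : Continuous Φ) :
    UpperSemicontinuousOn (fun p => F p.1 - G p.2 - Φ p) (s ×ˢ s') := by
  have h₁ : UpperSemicontinuousOn (fun p : α × β => F p.1) (s ×ˢ s') :=
    hF.comp continuousOn_fst fun _ hp => hp.1
  have h₂ : UpperSemicontinuousOn (fun p : α × β => -G p.2) (s ×ˢ s') :=
    continuous_neg.comp_lowerSemicontinuousOn_antitone
      (hG.comp continuousOn_snd fun _ hp => hp.2) fun _ _ h => neg_le_neg h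
  have h₃ : UpperSemicontinuousOn (fun p => -Φ p) (s ×ˢ s') :=
    hΦ.neg.continuousOn.upperSemicontinuousOn
  simpa only [sub_eq_add_neg] using (h₁.add h₂).add h₃

theorem Finset.exists_forall_le_of_upperSemicontinuousOn {ι γ : Type*} [LinearOrder γ]
    {I : Finset ι} (hI : I.Nonempty) {K : Set α} (hK : IsCompact K) (hKne : K.Nonempty)
    {F : ι → α → γ} (hF : ∀ i ∈ I, UpperSemicontinuousOn (F i) K) :
    ∃ i ∈ I, ∃ p ∈ K, ∀ j ∈ I, ∀ q ∈ K, F j q ≤ F i p := by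
  have hmax : ∀ i ∈ I, ∃ p ∈ K, IsMaxOn (F i) K p := fun i hi => (hF i hi).exists_isMaxOn hKne hK
  have : Nonempty α := ⟨hKne.some⟩
  choose! p hpK hp using hmax
  obtain ⟨i, hi, hmax⟩ := I.exists_max_image (fun i => F i (p i)) hI
  exact ⟨i, hi, p i, hpK i hi, fun j hj q hq => (hp j hj hq).trans (hmax j hj)⟩

theorem Finset.exists_forall_sub_le_of_semicontinuousOn {ι : Type*} {I : Finset ι}
    (hI : I.Nonempty) {K : Set α} (hK : IsCompact K) (hKne : K.Nonempty) {F G : ι → α → ℝ}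
    (hF : ∀ i ∈ I, UpperSemicontinuousOn (F i) K) (hG : ∀ i ∈ I, LowerSemicontinuousOn (G i) K) :
    ∃ C, ∀ i ∈ I, ∀ t ∈ K, ∀ s ∈ K, F i t - G i s ≤ C := by
  obtain ⟨i, -, p, -, hp⟩ := I.exists_forall_le_of_upperSemicontinuousOn hI (hK.prod hK)
    (hKne.prod hKne) fun i hi => (hF i hi).fst_sub_snd_sub (hG i hi) continuous_zero
  exact ⟨_, fun j hj t ht s hs => by simpa using hp j hj (t, s) ⟨ht, hs⟩⟩

end Semicontinuity

theorem Jker_nonneg {M : Type*} {η : ℝ → ℝ} {Cη ε : ℝ} (hη : ∀ t, 0 ≤ η t) (hCη : 0 ≤ Cη)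
    (hε : 0 ≤ ε) (dt : M → M → ℝ) (x y : M) : 0 ≤ Jker η Cη ε dt x y := by
  have := hη (dt x y / ε)
  unfold Jker
  positivity

theorem nonlocalGrad_le_nonlocalGrad {M τ : Type*} {Mt : Finset M} {hMt : Mt.Nonempty}
    {J : M → M → ℝ} {f g : M → τ → ℝ} {x : M} {t s : τ} (hJ : ∀ y ∈ Mt, 0 ≤ J x y)
    (h : ∀ y ∈ Mt, g x s - g y s ≤ f x t - f y t) :
    nonlocalGrad Mt hMt J g x s ≤ nonlocalGrad Mt hMt J f x t :=
  Finset.sup'_mono_fun fun y hy => mul_le_mul_of_nonneg_left (h y hy) (hJ y hy)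

noncomputable def doublingPenalty (δ : ℝ) (β : ℝ → ℝ) (t s : ℝ) : ℝ :=
  (t - s) ^ 2 / (2 * δ) + β t + β s

section DoublingPenalty

variable {δ : ℝ} {β : ℝ → ℝ} {b t s : ℝ}

theorem hasDerivAt_doublingPenalty_fst (hδ : δ ≠ 0) (hβ : HasDerivAt β b t) :
    HasDerivAt (doublingPenalty δ β · s) ((t - s) / δ + b) t := by
  have hsq := (((hasDerivAt_id t).sub_const s).fun_pow 2).div_const (2 * δ)
  refine ((hsq.add hβ).add_const (β s)).congr_deriv ?_
  norm_num
  field_simp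

theorem hasDerivAt_doublingPenalty_snd (hδ : δ ≠ 0) (hβ : HasDerivAt β b s) :
    HasDerivAt (doublingPenalty δ β t ·) (b - (t - s) / δ) s := by
  have hsq := (((hasDerivAt_id s).const_sub t).fun_pow 2).div_const (2 * δ)
  refine (((hsq.add hβ).const_add (β t)).congr_deriv ?_).congr_of_eventuallyEq
    (Eventually.of_forall fun s => ?_)
  · norm_num
    field_simp
    ring
  · simp only [doublingPenalty, Pi.add_apply, id]
    ring

theorem contDiff_doublingPenalty_fst (hβ : ContDiff ℝ 1 β) :
    ContDiff ℝ 1 (doublingPenalty δ β · s) := by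
  unfold doublingPenalty
  fun_prop

theorem contDiff_doublingPenalty_snd (hβ : ContDiff ℝ 1 β) :
    ContDiff ℝ 1 (doublingPenalty δ β t ·) := by
  unfold doublingPenalty
  fun_prop

end DoublingPenalty

theorem exists_barrier {t₁ T₂ K ε : ℝ} (ht₁ : 0 ≤ t₁) (ht₁T₂ : t₁ < T₂) (hε : 0 < ε) :
    ∃ β : ℝ → ℝ, ContDiff ℝ 1 β ∧ (∀ t, 0 ≤ t → 0 ≤ β t ∧ ∃ b > 0, HasDerivAt β b t) ∧
      β t₁ < ε ∧ K ≤ β T₂ := by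
  have hT₂ : 0 < T₂ := ht₁.trans_lt ht₁T₂
  set A := max K 0 + 1
  have hA : 0 < A := by positivity
  obtain ⟨n, hn⟩ := exists_pow_lt_of_lt_one (by positivity : 0 < ε / (2 * A))
    ((div_lt_one hT₂).2 ht₁T₂)
  refine ⟨fun t => ε / (2 * T₂) * t + A * (t / T₂) ^ n, by fun_prop,
    fun t ht => ⟨by positivity, ?_⟩, ?_, ?_⟩
  · have hpow := (((hasDerivAt_id t).div_const T₂).fun_pow n).const_mul A
    refine ⟨_, ?_, ((hasDerivAt_id t).const_mul (ε / (2 * T₂))).add hpow⟩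
    simp only [id, mul_one]
    positivity
  · have hlin : ε / (2 * T₂) * t₁ < ε / 2 := by
      rw [div_mul_eq_mul_div, div_lt_div_iff₀ (by positivity) two_pos]
      nlinarith
    have hpow : A * (t₁ / T₂) ^ n < ε / 2 := by
      calc A * (t₁ / T₂) ^ n < A * (ε / (2 * A)) := mul_lt_mul_of_pos_left hn hA
        _ = ε / 2 := by field_simp
    simp only
    linarith
  · simp only [div_self hT₂.ne', one_pow, mul_one]
    have : 0 ≤ ε / (2 * T₂) * T₂ := by positivity
    linarith [le_max_left K 0]

section Viscosity

variable {M : Type*} {Mt Γt : Finset M} {hMt : Mt.Nonempty} {J : M → M → ℝ} {Pt f0 : M → ℝ}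
  {T : ℝ} {f g : M → ℝ → ℝ} {x : M} {t : ℝ}

theorem IsNonlocalSubSol.le_f0_of_mem (hf : IsNonlocalSubSol Mt Γt hMt J Pt f0 T f) (hx : x ∈ Mt)
    (hxΓ : x ∈ Γt) (ht : t ∈ Ico 0 T) : f x t ≤ f0 x := by
  rcases ht.1.eq_or_lt with rfl | ht₀
  · exact hf.2.2 x hx
  · exact hf.2.1 x hxΓ t ⟨ht₀, ht.2⟩

theorem IsNonlocalSuperSol.f0_le_of_mem (hg : IsNonlocalSuperSol Mt Γt hMt J Pt f0 T g)
    (hx : x ∈ Mt) (hxΓ : x ∈ Γt) (ht : t ∈ Ico 0 T) : f0 x ≤ g x t := by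
  rcases ht.1.eq_or_lt with rfl | ht₀
  · exact hg.2.2 x hx
  · exact hg.2.1 x hxΓ t ⟨ht₀, ht.2⟩

theorem IsNonlocalSubSol.exists_initial_layer_le_add (hf : IsNonlocalSubSol Mt Γt hMt J Pt f0 T f)
    (hg : IsNonlocalSuperSol Mt Γt hMt J Pt f0 T g)
    (hf_usc : ∀ x ∈ Mt, UpperSemicontinuousOn (f x) (Ico 0 T))
    (hg_lsc : ∀ x ∈ Mt, LowerSemicontinuousOn (g x) (Ico 0 T)) (hT : 0 < T) {ε : ℝ}
    (hε : 0 < ε) :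
    ∃ r > 0, ∀ x ∈ Mt, ∀ t ∈ Ico 0 T, ∀ s ∈ Ico 0 T, t < r → s < r → f x t ≤ g x s + ε := by
  have h0 : (0 : ℝ) ∈ Ico 0 T := ⟨le_rfl, hT⟩
  have hnear : ∀ᶠ t in 𝓝[Ico 0 T] 0, ∀ x ∈ Mt, f x t < f x 0 + ε / 2 ∧ g x 0 - ε / 2 < g x t :=
    (eventually_all_finset Mt).2 fun x hx =>
      (hf_usc x hx 0 h0 _ (by linarith)).and (hg_lsc x hx 0 h0 _ (by linarith))
  obtain ⟨r, hr, hball⟩ := Metric.mem_nhdsWithin_iff.1 hnear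
  have hmem {t} (ht : t ∈ Ico 0 T) (htr : t < r) : t ∈ Metric.ball 0 r ∩ Ico 0 T :=
    ⟨by rwa [Metric.mem_ball, Real.dist_0_eq_abs, abs_of_nonneg ht.1], ht⟩
  refine ⟨r, hr, fun x hx t ht s hs htr hsr => ?_⟩
  have hft := (hball (hmem ht htr) x hx).1
  have hgs := (hball (hmem hs hsr) x hx).2
  linarith [hf.2.2 x hx, hg.2.2 x hx]

theorem IsNonlocalSubSol.false_of_doubling_max (hf : IsNonlocalSubSol Mt Γt hMt J Pt f0 T f)
    (hg : IsNonlocalSuperSol Mt Γt hMt J Pt f0 T g) {x₀ : M} {t₀ s₀ : ℝ}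
    (hJ : ∀ y ∈ Mt, 0 ≤ J x₀ y) (hx₀ : x₀ ∈ Mt) (hx₀Γ : x₀ ∉ Γt) (ht₀ : t₀ ∈ Ioo 0 T)
    (hs₀ : s₀ ∈ Ioo 0 T) {Φ : ℝ → ℝ → ℝ} {a b : ℝ} (hΦ₁ : ContDiff ℝ 1 (Φ · s₀))
    (hΦ₂ : ContDiff ℝ 1 (Φ t₀ ·)) (ha : HasDerivAt (Φ · s₀) a t₀)
    (hb : HasDerivAt (Φ t₀ ·) b s₀) (hab : 0 < a + b)
    (hmax : ∀ y ∈ Mt, ∀ᶠ p in 𝓝 (t₀, s₀),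
      f y p.1 - g y p.2 - Φ p.1 p.2 ≤ f x₀ t₀ - g x₀ s₀ - Φ t₀ s₀) : False := by
  have hsub : a + nonlocalGrad Mt hMt J f x₀ t₀ ≤ Pt x₀ := by
    refine ha.deriv ▸ hf.1 x₀ hx₀ hx₀Γ t₀ ht₀ _ hΦ₁ ?_
    filter_upwards [(tendsto_id.prodMk_nhds tendsto_const_nhds).eventually (hmax x₀ hx₀)]
      with t ht
    rw [id] at ht
    linarith
  have hsup : Pt x₀ ≤ -b + nonlocalGrad Mt hMt J g x₀ s₀ := by
    refine hb.neg.deriv ▸ hg.1 x₀ hx₀ hx₀Γ s₀ hs₀ _ hΦ₂.neg ?_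
    filter_upwards [(tendsto_const_nhds.prodMk_nhds tendsto_id).eventually (hmax x₀ hx₀)]
      with s hs
    rw [id] at hs
    simp only [Pi.neg_apply, sub_neg_eq_add]
    linarith
  have hgrad : nonlocalGrad Mt hMt J g x₀ s₀ ≤ nonlocalGrad Mt hMt J f x₀ t₀ :=
    nonlocalGrad_le_nonlocalGrad hJ fun y hy => by linarith [(hmax y hy).self_of_nhds]
  linarith

theorem IsNonlocalSubSol.notMem_and_mem_Ioo_of_lt (hf : IsNonlocalSubSol Mt Γt hMt J Pt f0 T f)
    (hg : IsNonlocalSuperSol Mt Γt hMt J Pt f0 T g) {T₂ δ r K ε s : ℝ} {β : ℝ → ℝ}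
    (hT₂ : T₂ < T) (hδ : 0 < δ) (hr : 0 < r) (hδr : 2 * δ * K ≤ r ^ 2)
    (hβ : ∀ t, 0 ≤ t → 0 ≤ β t) (hβT₂ : K ≤ β T₂) (hε : 0 ≤ ε) (hx : x ∈ Mt)
    (ht : t ∈ Icc 0 T₂) (hs : s ∈ Icc 0 T₂) (hK : f x t - g x s ≤ K)
    (hlayer : t < r → s < r → f x t - g x s ≤ ε)
    (hlt : ε < f x t - g x s - doublingPenalty δ β t s) :
    x ∉ Γt ∧ t ∈ Ioo 0 T₂ ∧ s ∈ Ioo 0 T₂ := by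
  have hβt := hβ t ht.1
  have hβs := hβ s hs.1
  have hsq : 0 ≤ (t - s) ^ 2 / (2 * δ) := by positivity
  unfold doublingPenalty at hlt
  have hclose : -r < t - s ∧ t - s < r := by
    refine abs_lt_of_sq_lt_sq' ?_ hr.le
    have h : (t - s) ^ 2 / (2 * δ) < K := by linarith
    rw [div_lt_iff₀ (by positivity)] at h
    linarith
  have hIcc : Icc 0 T₂ ⊆ Ico 0 T := fun u hu => ⟨hu.1, hu.2.trans_lt hT₂⟩
  refine ⟨fun hxΓ => ?_, ⟨?_, ?_⟩, ⟨?_, ?_⟩⟩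
  · linarith [hf.le_f0_of_mem hx hxΓ (hIcc ht), hg.f0_le_of_mem hx hxΓ (hIcc hs)]
  · by_contra! h
    obtain rfl : t = 0 := le_antisymm h ht.1
    linarith [hlayer hr (by linarith)]
  · by_contra! h
    obtain rfl : t = T₂ := le_antisymm ht.2 h
    linarith
  · by_contra! h
    obtain rfl : s = 0 := le_antisymm h hs.1
    linarith [hlayer (by linarith) hr]
  · by_contra! h
    obtain rfl : s = T₂ := le_antisymm hs.2 h
    linarith

theorem IsNonlocalSubSol.le (hf : IsNonlocalSubSol Mt Γt hMt J Pt f0 T f)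
    (hg : IsNonlocalSuperSol Mt Γt hMt J Pt f0 T g) (hJ : ∀ x ∈ Mt, ∀ y ∈ Mt, 0 ≤ J x y)
    (hf_usc : ∀ x ∈ Mt, UpperSemicontinuousOn (f x) (Ico 0 T))
    (hg_lsc : ∀ x ∈ Mt, LowerSemicontinuousOn (g x) (Ico 0 T)) :
    ∀ x ∈ Mt, ∀ t ∈ Ico 0 T, f x t ≤ g x t := by
  intro x₁ hx₁ t₁ ht₁
  by_contra! hlt
  rcases ht₁.1.eq_or_lt with rfl | ht₁₀
  · linarith [hf.2.2 x₁ hx₁, hg.2.2 x₁ hx₁]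
  set θ := f x₁ t₁ - g x₁ t₁
  obtain ⟨T₂, ht₁T₂, hT₂T⟩ := exists_between ht₁.2
  have hIcc : Icc 0 T₂ ⊆ Ico 0 T := fun u hu => ⟨hu.1, hu.2.trans_lt hT₂T⟩
  have ht₁Icc : t₁ ∈ Icc 0 T₂ := ⟨ht₁.1, ht₁T₂.le⟩
  have hf_usc' x hx := (hf_usc x hx).mono hIcc
  have hg_lsc' x hx := (hg_lsc x hx).mono hIcc
  obtain ⟨K, hK⟩ := Mt.exists_forall_sub_le_of_semicontinuousOn hMt isCompact_Icc
    ⟨0, left_mem_Icc.2 (ht₁₀.trans ht₁T₂).le⟩ hf_usc' hg_lsc'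
  have hK₀ : 0 < K := (sub_pos.2 hlt).trans_le (hK x₁ hx₁ t₁ ht₁Icc t₁ ht₁Icc)
  obtain ⟨r, hr, hlayer⟩ :=
    hf.exists_initial_layer_le_add hg hf_usc hg_lsc (ht₁₀.trans ht₁.2) (half_pos (sub_pos.2 hlt))
  obtain ⟨β, hβC, hβ, hβt₁, hβT₂⟩ := exists_barrier (K := K) ht₁.1 ht₁T₂ (by linarith : 0 < θ / 4)
  set δ := r ^ 2 / (2 * K)
  have hδ : 0 < δ := by positivity
  have hδr : 2 * δ * K ≤ r ^ 2 := le_of_eq (by simp only [δ]; field_simp)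
  obtain ⟨x₀, hx₀, ⟨t₀, s₀⟩, ⟨ht₀, hs₀⟩, hmax⟩ :=
    Mt.exists_forall_le_of_upperSemicontinuousOn hMt (isCompact_Icc.prod isCompact_Icc)
      ⟨(t₁, t₁), ht₁Icc, ht₁Icc⟩ fun x hx => (hf_usc' x hx).fst_sub_snd_sub (hg_lsc' x hx)
        (Φ := fun p => doublingPenalty δ β p.1 p.2) (by unfold doublingPenalty; fun_prop)
  have hval : θ / 2 < f x₀ t₀ - g x₀ s₀ - doublingPenalty δ β t₀ s₀ := by
    have hpen : doublingPenalty δ β t₁ t₁ = 2 * β t₁ := by simp [doublingPenalty]; ring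
    linarith [hmax x₁ hx₁ (t₁, t₁) ⟨ht₁Icc, ht₁Icc⟩]
  obtain ⟨hx₀Γ, ht₀', hs₀'⟩ := hf.notMem_and_mem_Ioo_of_lt hg hT₂T hδ hr hδr
    (fun t ht => (hβ t ht).1) hβT₂ (by linarith) hx₀ ht₀ hs₀ (hK x₀ hx₀ t₀ ht₀ s₀ hs₀)
    (fun htr hsr => by linarith [hlayer x₀ hx₀ t₀ (hIcc ht₀) s₀ (hIcc hs₀) htr hsr]) hval
  obtain ⟨a, ha, hda⟩ := (hβ t₀ ht₀.1).2
  obtain ⟨b, hb, hdb⟩ := (hβ s₀ hs₀.1).2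
  refine hf.false_of_doubling_max hg (hJ x₀ hx₀) hx₀ hx₀Γ ⟨ht₀'.1, ht₀'.2.trans hT₂T⟩
    ⟨hs₀'.1, hs₀'.2.trans hT₂T⟩ (contDiff_doublingPenalty_fst hβC)
    (contDiff_doublingPenalty_snd hβC) (hasDerivAt_doublingPenalty_fst hδ.ne' hda)
    (hasDerivAt_doublingPenalty_snd hδ.ne' hdb) (by linarith) fun y hy => ?_
  filter_upwards [prod_mem_nhds (Icc_mem_nhds ht₀'.1 ht₀'.2) (Icc_mem_nhds hs₀'.1 hs₀'.2)]
    with p hp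
  exact hmax y hy p hp

end Viscosity

theorem nonlocal_comparison_principle_general
    {M : Type*}
    (Mt Γt : Finset M) (hMt : Mt.Nonempty)
    (T ε : ℝ) (hε : 0 < ε)
    (η : ℝ → ℝ) (hη : ∀ t, 0 ≤ η t)
    (Cη : ℝ) (hCη_pos : 0 < Cη)
    (dt : M → M → ℝ)
    (Pt f0 : M → ℝ)
    (f g : M → ℝ → ℝ)
    (hf_usc : ∀ x ∈ Mt, UpperSemicontinuousOn (f x) (Set.Ico (0:ℝ) T))
    (hg_lsc : ∀ x ∈ Mt, LowerSemicontinuousOn (g x) (Set.Ico (0:ℝ) T))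
    (hf_sub : IsNonlocalSubSol Mt Γt hMt (Jker η Cη ε dt) Pt f0 T f)
    (hg_super : IsNonlocalSuperSol Mt Γt hMt (Jker η Cη ε dt) Pt f0 T g) :
    ∀ x ∈ Mt, ∀ t ∈ Set.Ico (0:ℝ) T, f x t ≤ g x t :=
  hf_sub.le hg_super (fun x _ y _ => Jker_nonneg hη hCη_pos.le hε.le dt x y) hf_usc hg_lsc

/-- **Comparison principle for the non-local Eikonal equation** (Proposition 3.11).
Under (H1)–(H3) and (H9), a bounded usc-in-time viscosity sub-solution of (P_ε)
lies below any lsc-in-time viscosity super-solution of (P_ε) on `M̃ × [0,T)`. -/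
theorem nonlocal_comparison_principle
    {M : Type*} [MetricSpace M] [CompactSpace M]
    (Mt Γt : Finset M) (hMt : Mt.Nonempty) (hΓ : Γt ⊆ Mt)
    (T ε : ℝ) (hT : 0 < T) (hε : 0 < ε)
    (η : ℝ → ℝ) (hη : ∀ t, 0 ≤ η t)
    (Cη : ℝ) (hCη_pos : 0 < Cη)
    (hCη_sup : IsLUB ((fun t => t * η t) '' Set.Ici (0:ℝ)) Cη)
    (dt : M → M → ℝ) (hdt_symm : ∀ x y, dt x y = dt y x)
    (hdt_nonneg : ∀ x y, 0 ≤ dt x y)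
    (Pt f0 : M → ℝ) (hPt_nonneg : ∀ x ∈ Mt, x ∉ Γt → 0 ≤ Pt x)
    (f g : M → ℝ → ℝ)
    (hf_bdd : ∃ C, ∀ x ∈ Mt, ∀ t ∈ Set.Ico (0:ℝ) T, |f x t| ≤ C)
    (hf_usc : ∀ x ∈ Mt, UpperSemicontinuousOn (f x) (Set.Ico (0:ℝ) T))
    (hg_lsc : ∀ x ∈ Mt, LowerSemicontinuousOn (g x) (Set.Ico (0:ℝ) T))
    (hf_sub : IsNonlocalSubSol Mt Γt hMt (Jker η Cη ε dt) Pt f0 T f)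
    (hg_super : IsNonlocalSuperSol Mt Γt hMt (Jker η Cη ε dt) Pt f0 T g) :
    ∀ x ∈ Mt, ∀ t ∈ Set.Ico (0:ℝ) T, f x t ≤ g x t :=
  nonlocal_comparison_principle_general Mt Γt hMt T ε hε η hη Cη hCη_pos dt Pt f0 f g hf_usc hg_lsc
    hf_sub hg_super
end

section
/- Comparison principle for the forward Euler scheme (Lemma B.2): under assumptions (H1)–(H3) and (H9), if f^ε and g^ε are, respectively, a bounded discrete sub-solution and a discrete super-solution of the scheme (P_ε^FD), and the CFL condition 0 < Δt ≤ ε C_η / sup_{t≥0} η(t) holds, then sup_{M̃ × {t₀,…,t_{N_T}}} ( f^ε − g^ε ) ≤ sup_{(Γ̃ × {t₁,…,t_{N_T}}) ∪ (M̃ × {t₀})} | f^ε − g^ε |. -/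
/-- Discrete sub-solution of the forward Euler scheme (P_ε^FD); `f x i` is the value
at the point `x ∈ M̃` and time `t_i = iΔt`. -/
def IsDiscreteSubSol {M : Type*} (Mt Γt : Finset M) (hMt : Mt.Nonempty) (J : M → M → ℝ)
    (Pt f0 : M → ℝ) (Δt : ℝ) (NT : ℕ) (f : M → ℕ → ℝ) : Prop :=
  (∀ x ∈ Mt, x ∉ Γt → ∀ i, 1 ≤ i → i ≤ NT →
      (f x i - f x (i - 1)) / Δt + nonlocalGrad Mt hMt J f x (i - 1) ≤ Pt x) ∧
  (∀ x ∈ Γt, ∀ i, 1 ≤ i → i ≤ NT → f x i ≤ f0 x) ∧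
  (∀ x ∈ Mt, f x 0 ≤ f0 x)

/-- Discrete super-solution of the forward Euler scheme (P_ε^FD). -/
def IsDiscreteSuperSol {M : Type*} (Mt Γt : Finset M) (hMt : Mt.Nonempty) (J : M → M → ℝ)
    (Pt f0 : M → ℝ) (Δt : ℝ) (NT : ℕ) (f : M → ℕ → ℝ) : Prop :=
  (∀ x ∈ Mt, x ∉ Γt → ∀ i, 1 ≤ i → i ≤ NT →
      Pt x ≤ (f x i - f x (i - 1)) / Δt + nonlocalGrad Mt hMt J f x (i - 1)) ∧
  (∀ x ∈ Γt, ∀ i, 1 ≤ i → i ≤ NT → f0 x ≤ f x i) ∧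
  (∀ x ∈ Mt, f0 x ≤ f x 0)

/-- Discrete solution of the forward Euler scheme (P_ε^FD). -/
def IsDiscreteSol {M : Type*} (Mt Γt : Finset M) (hMt : Mt.Nonempty) (J : M → M → ℝ)
    (Pt f0 : M → ℝ) (Δt : ℝ) (NT : ℕ) (f : M → ℕ → ℝ) : Prop :=
  (∀ x ∈ Mt, x ∉ Γt → ∀ i, 1 ≤ i → i ≤ NT →
      (f x i - f x (i - 1)) / Δt + nonlocalGrad Mt hMt J f x (i - 1) = Pt x) ∧
  (∀ x ∈ Γt, ∀ i, 1 ≤ i → i ≤ NT → f x i = f0 x) ∧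
  (∀ x ∈ Mt, f x 0 = f0 x)

/-- **Comparison principle for the forward Euler scheme** (Lemma B.2).
Under (H1)–(H3), (H9) and the CFL condition `Δt ≤ ε C_η / sup η` (expressed as
`Δt · η(t) ≤ ε C_η` for all `t ≥ 0`), a bounded discrete sub-solution `f` and a
discrete super-solution `g` of (P_ε^FD) satisfy
`sup_{M̃×{t₀,…,t_{N_T}}} (f − g) ≤ sup_{boundary} |f − g|`: for every upper bound `B`
of `|f − g|` on the parabolic boundary, `f − g ≤ B` everywhere. -/
theorem discrete_comparison_principle
    {M : Type*} [MetricSpace M] [CompactSpace M]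
    (Mt Γt : Finset M) (hMt : Mt.Nonempty) (hΓ : Γt ⊆ Mt)
    (ε : ℝ) (hε : 0 < ε)
    (η : ℝ → ℝ) (hη : ∀ t, 0 ≤ η t)
    (Cη : ℝ) (hCη_pos : 0 < Cη)
    (hCη_sup : IsLUB ((fun t => t * η t) '' Set.Ici (0:ℝ)) Cη)
    (dt : M → M → ℝ) (hdt_symm : ∀ x y, dt x y = dt y x)
    (hdt_nonneg : ∀ x y, 0 ≤ dt x y)
    (Pt f0 : M → ℝ) (hPt_nonneg : ∀ x ∈ Mt, x ∉ Γt → 0 ≤ Pt x)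
    (Δt : ℝ) (NT : ℕ) (hΔt : 0 < Δt)
    -- CFL condition `0 < Δt ≤ ε C_η / sup_{t ≥ 0} η(t)`
    (hCFL : ∀ t, 0 ≤ t → Δt * η t ≤ ε * Cη)
    (f g : M → ℕ → ℝ)
    (hf_bdd : ∃ C, ∀ x ∈ Mt, ∀ i ≤ NT, |f x i| ≤ C)
    (hf_sub : IsDiscreteSubSol Mt Γt hMt (Jker η Cη ε dt) Pt f0 Δt NT f)
    (hg_super : IsDiscreteSuperSol Mt Γt hMt (Jker η Cη ε dt) Pt f0 Δt NT g)
    (B : ℝ)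
    (hB_bdry : ∀ x ∈ Γt, ∀ i, 1 ≤ i → i ≤ NT → |f x i - g x i| ≤ B)
    (hB_init : ∀ x ∈ Mt, |f x 0 - g x 0| ≤ B) :
    ∀ x ∈ Mt, ∀ i ≤ NT, f x i - g x i ≤ B := by
  suffices h : ∀ i, i ≤ NT → ∀ x ∈ Mt, f x i - g x i ≤ B by
    intro x hx i hi; exact h i hi x hx
  intro i
  induction i with
  | zero =>
    intro _ x hx
    exact (abs_le.mp (hB_init x hx)).2
  | succ i ih =>
    intro hi x hx
    have hi' : i ≤ NT := Nat.le_of_succ_le hi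
    by_cases hxΓ : x ∈ Γt
    · exact (abs_le.mp (hB_bdry x hxΓ (i + 1) (Nat.succ_le_succ (Nat.zero_le i)) hi)).2
    · have h1 := hf_sub.1 x hx hxΓ (i + 1) (Nat.succ_le_succ (Nat.zero_le i)) hi
      have h2 := hg_super.1 x hx hxΓ (i + 1) (Nat.succ_le_succ (Nat.zero_le i)) hi
      simp only [Nat.add_sub_cancel] at h1 h2
      obtain ⟨y, hy, hyeq⟩ := Finset.exists_mem_eq_sup' hMt
        (fun y => Jker η Cη ε dt x y * (g x i - g y i))
      set Jv := Jker η Cη ε dt x y with hJv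
      have hSfy : Jv * (f x i - f y i) ≤ nonlocalGrad Mt hMt (Jker η Cη ε dt) f x i :=
        Finset.le_sup' (fun y => Jker η Cη ε dt x y * (f x i - f y i)) hy
      have hSgy : nonlocalGrad Mt hMt (Jker η Cη ε dt) g x i = Jv * (g x i - g y i) := hyeq
      have hJ0 : 0 ≤ Jv := by
        rw [hJv, Jker]
        exact mul_nonneg (inv_nonneg.2 hCη_pos.le)
          (mul_nonneg (inv_nonneg.2 hε.le) (hη _))
      have hJle : Δt * Jv ≤ 1 := by
        have h := hCFL (dt x y / ε) (div_nonneg (hdt_nonneg x y) hε.le)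
        rw [hJv, Jker, show Δt * (Cη⁻¹ * (ε⁻¹ * η (dt x y / ε)))
            = (Δt * η (dt x y / ε)) / (Cη * ε) by field_simp,
          div_le_one (by positivity)]
        linarith
      have h1' : f x (i + 1) - f x i ≤
          (Pt x - nonlocalGrad Mt hMt (Jker η Cη ε dt) f x i) * Δt :=
        (div_le_iff₀ hΔt).mp (by linarith)
      have h2' : (Pt x - nonlocalGrad Mt hMt (Jker η Cη ε dt) g x i) * Δt ≤
          g x (i + 1) - g x i :=
        (le_div_iff₀ hΔt).mp (by linarith)
      have hax : f x i - g x i ≤ B := ih hi' x hx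
      have hay : f y i - g y i ≤ B := ih hi' y hy
      have hkey : f x (i + 1) - g x (i + 1) ≤
          (f x i - g x i) + Δt * (Jv * ((f y i - g y i) - (f x i - g x i))) := by
        nlinarith [hSfy, hSgy, h1', h2']
      by_cases hcmp : f x i - g x i ≤ f y i - g y i
      · have : Δt * (Jv * ((f y i - g y i) - (f x i - g x i)))
            ≤ (f y i - g y i) - (f x i - g x i) := by
          nlinarith
        linarith
      · have : Δt * (Jv * ((f y i - g y i) - (f x i - g x i))) ≤ 0 := by
          have := mul_nonneg hΔt.le hJ0
          nlinarith
        linarith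
end

section
/- Quantitative coverage probability (Lemma 5.2, coverage part, metric-measure form): let (M,d) be a compact metric space, m* ≥ 1, μ a Borel probability measure on M, and c₁, c₂ > 0, δ₀ > 0 constants such that for every δ ∈ (0, δ₀]: (i) μ(B(x,δ)) ≥ c₁ δ^{m*} for all x ∈ M, and (ii) M admits a δ-net of cardinality at most c₂ δ^{−m*}. Let u₁,…,uₙ be i.i.d. with law μ and V_n := {u₁,…,uₙ}. Then for every τ > 0 there exists n(τ) ∈ ℕ such that for all n ≥ n(τ), setting δ_n := ( (1+τ)·log n / (c₁ n) )^{1/m*}, one has Pr( max_{x ∈ M} d(x, V_n) > 2δ_n ) ≤ c₁ c₂ · n^{−τ}. In particular, choosing ε_n by a·ε_n^{1+ν}/8 = 2δ_n (i.e., ε_n^{1+ν} = K₁ ((1+τ) log n / n)^{1/m*} with K₁ depending only on a, c₁), assumption (H15) holds with probability at least 1 − c₁ c₂ n^{−τ}. -/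
/-!
A `δ`-net `S` has at most `c₂ δ^{-m*}` points, and if the samples miss the `2δ`-ball around
some `x` then, by the triangle inequality, they all miss the `δ`-ball around the net point
nearest to `x`. Each such ball has mass at least `c₁ δ^{m*}`, so a union bound gives
`P(not a 2δ-cover) ≤ |S| (1 - c₁ δ^{m*})^n ≤ |S| exp(-n c₁ δ^{m*})`. With `δ = δ_n` the
exponential is `n^{-(1+τ)}` and `|S| ≤ c₂ c₁ n / ((1+τ) log n) ≤ c₁ c₂ n`.
-/

open MeasureTheory Filter Topology Metric

lemma one_sub_ofReal_pow_le_ofReal_exp {p : ℝ} (hp : 0 ≤ p) (n : ℕ) :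
    (1 - ENNReal.ofReal p) ^ n ≤ ENNReal.ofReal (Real.exp (-(n * p))) := by
  calc (1 - ENNReal.ofReal p) ^ n = ENNReal.ofReal (1 - p) ^ n := by
        rw [ENNReal.ofReal_sub _ hp, ENNReal.ofReal_one]
    _ ≤ ENNReal.ofReal (Real.exp (-p)) ^ n := by
        gcongr; exact Real.one_sub_le_exp_neg p
    _ = ENNReal.ofReal (Real.exp (-(n * p))) := by
        rw [← ENNReal.ofReal_pow (Real.exp_pos _).le, ← Real.exp_nat_mul, mul_neg]

lemma one_sub_le_measure_of_measure_compl_le {α : Type*} [MeasurableSpace α]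
    {μ : Measure α} [IsProbabilityMeasure μ] {s : Set α} {b : ENNReal} (h : μ sᶜ ≤ b) :
    1 - b ≤ μ s := by
  rw [tsub_le_iff_right, ← measure_univ (μ := μ)]
  exact (measure_univ_le_add_compl s).trans (add_le_add_right h _)

lemma measure_pi_forall_notMem {α ι : Type*} [MeasurableSpace α] [Fintype ι]
    (μ : Measure α) [IsProbabilityMeasure μ] {s : Set α} (hs : MeasurableSet s) :
    Measure.pi (fun _ : ι => μ) {u | ∀ i, u i ∉ s} = (1 - μ s) ^ Fintype.card ι := by
  have : {u : ι → α | ∀ i, u i ∉ s} = Set.univ.pi fun _ => sᶜ := by ext; simp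
  rw [this, Measure.pi_pi, Finset.prod_const, Finset.card_univ, prob_compl_eq_one_sub hs]

section Covering

variable {M ι : Type*} [PseudoMetricSpace M]

lemma setOf_exists_far_subset_biUnion_net {δ : ℝ} {S : Finset M}
    (hS : ∀ x, ∃ j ∈ S, dist x j ≤ δ) :
    {u : ι → M | ∃ x, ∀ i, 2 * δ < dist x (u i)} ⊆
      ⋃ j ∈ S, {u | ∀ i, u i ∉ closedBall j δ} := by
  rintro u ⟨x, hx⟩
  obtain ⟨j, hjS, hxj⟩ := hS x
  refine Set.mem_biUnion hjS fun i hi => ?_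
  have := dist_triangle x j (u i)
  linarith [hx i, mem_closedBall'.mp hi]

variable [MeasurableSpace M] [OpensMeasurableSpace M] [Fintype ι]

lemma measure_pi_exists_far_le {μ : Measure M} [IsProbabilityMeasure μ] {δ p : ℝ}
    (hp : 0 ≤ p) (hball : ∀ x, ENNReal.ofReal p ≤ μ (closedBall x δ))
    {S : Finset M} (hS : ∀ x, ∃ j ∈ S, dist x j ≤ δ) :
    Measure.pi (fun _ : ι => μ) {u | ∃ x, ∀ i, 2 * δ < dist x (u i)} ≤
      ENNReal.ofReal (S.card * Real.exp (-(Fintype.card ι * p))) := by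
  calc _ ≤ ∑ j ∈ S, Measure.pi (fun _ : ι => μ) {u | ∀ i, u i ∉ closedBall j δ} :=
        (measure_mono (setOf_exists_far_subset_biUnion_net hS)).trans
          (measure_biUnion_finset_le _ _)
    _ ≤ ∑ _j ∈ S, ENNReal.ofReal (Real.exp (-(Fintype.card ι * p))) := by
        gcongr with j
        rw [measure_pi_forall_notMem μ measurableSet_closedBall]
        exact (pow_le_pow_left' (tsub_le_tsub_left (hball j) 1) _).trans
          (one_sub_ofReal_pow_le_ofReal_exp hp _)
    _ = _ := by
        rw [Finset.sum_const, nsmul_eq_mul, ENNReal.ofReal_mul (by positivity),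
          ENNReal.ofReal_natCast]

end Covering

lemma eventually_one_le_log_and_rpow_le {c τ q δ₀ : ℝ} (hc : 0 < c) (hτ : 0 < τ)
    (hq : 0 < q) (hδ₀ : 0 < δ₀) :
    ∀ᶠ n : ℕ in atTop, 1 ≤ (1 + τ) * Real.log n ∧
      ((1 + τ) * Real.log n / (c * n)) ^ q ≤ δ₀ := by
  have hlog : Tendsto (fun n : ℕ => (1 + τ) * Real.log n) atTop atTop :=
    (Real.tendsto_log_atTop.comp tendsto_natCast_atTop_atTop).const_mul_atTop (by linarith)
  have hL : Tendsto (fun n : ℕ => (1 + τ) * Real.log n / (c * n)) atTop (𝓝 0) := by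
    have h := Real.tendsto_pow_log_div_mul_add_atTop 1 0 1 one_ne_zero
    simp only [pow_one, one_mul, add_zero] at h
    simpa [mul_div_assoc, div_mul_eq_div_div_swap] using
      ((h.comp tendsto_natCast_atTop_atTop).const_mul ((1 + τ) / c)).congr fun n => by
        simp only [Function.comp]; field_simp
  have hδ : Tendsto (fun n : ℕ => ((1 + τ) * Real.log n / (c * n)) ^ q) atTop (𝓝 0) := by
    simpa [Function.comp_def, Real.zero_rpow hq.ne'] using
      ((Real.continuousAt_rpow_const 0 q (Or.inr hq.le)).tendsto.comp hL)
  exact (hlog.eventually_ge_atTop 1).and (hδ.eventually_le_const hδ₀)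

lemma natCast_pos_of_one_le_mul_log {t : ℝ} {n : ℕ} (h : 1 ≤ t * Real.log n) :
    (0 : ℝ) < n :=
  Nat.cast_pos.mpr (Nat.pos_of_ne_zero (by rintro rfl; norm_num at h))

lemma mul_exp_le_rpow_neg {c₁ c₂ τ K : ℝ} {n : ℕ} (hc₁ : 0 < c₁) (hc₂ : 0 ≤ c₂)
    (hlog : 1 ≤ (1 + τ) * Real.log n)
    (hK : K ≤ c₂ * ((1 + τ) * Real.log n / (c₁ * n))⁻¹) :
    K * Real.exp (-(n * (c₁ * ((1 + τ) * Real.log n / (c₁ * n))))) ≤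
      c₁ * c₂ * (n : ℝ) ^ (-τ) := by
  have hn := natCast_pos_of_one_le_mul_log hlog
  have hexp : Real.exp (-(n * (c₁ * ((1 + τ) * Real.log n / (c₁ * n))))) =
      (n : ℝ) ^ (-(1 + τ)) := by
    rw [Real.rpow_def_of_pos hn]; congr 1; field_simp
  have hinv : ((1 + τ) * Real.log n / (c₁ * n))⁻¹ ≤ c₁ * n := by
    rw [inv_div]; exact div_le_self (by positivity) hlog
  calc _ ≤ c₂ * (c₁ * n) * (n : ℝ) ^ (-(1 + τ)) := by
        rw [hexp]; gcongr; exact hK.trans (by gcongr)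
    _ = c₁ * c₂ * (n : ℝ) ^ (1 + -(1 + τ)) := by rw [Real.rpow_add hn, Real.rpow_one]; ring
    _ = c₁ * c₂ * (n : ℝ) ^ (-τ) := by ring_nf

theorem quantitative_coverage_probability_general
    {M : Type*} [MetricSpace M]
    [MeasurableSpace M] [BorelSpace M]
    (μ : Measure M) [IsProbabilityMeasure μ]
    (mstar : ℕ) (hm : 1 ≤ mstar)
    (c₁ c₂ δ₀ : ℝ) (hc₁ : 0 < c₁) (hc₂ : 0 < c₂) (hδ₀ : 0 < δ₀)
    -- (i) small balls have measure at least `c₁ δ^{m*}`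
    (hball : ∀ δ : ℝ, 0 < δ → δ ≤ δ₀ → ∀ x : M,
      ENNReal.ofReal (c₁ * δ ^ mstar) ≤ μ (Metric.closedBall x δ))
    -- (ii) `M` admits `δ`-nets of cardinality at most `c₂ δ^{−m*}`
    (hnet : ∀ δ : ℝ, 0 < δ → δ ≤ δ₀ → ∃ S : Finset M,
      (S.card : ℝ) ≤ c₂ * δ ^ (-(mstar : ℝ)) ∧ ∀ x : M, ∃ j ∈ S, dist x j ≤ δ)
    (a ν : ℝ) :
    ∀ τ : ℝ, 0 < τ → ∃ N₀ : ℕ, ∀ n : ℕ, N₀ ≤ n →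
      (Measure.pi (fun _ : Fin n => μ)
          {u : Fin n → M | ∃ x : M, ∀ i,
            2 * ((1 + τ) * Real.log n / (c₁ * n)) ^ ((mstar : ℝ)⁻¹) < dist x (u i)}
        ≤ ENNReal.ofReal (c₁ * c₂ * (n : ℝ) ^ (-τ))) ∧
      -- in particular, (H15) with `M̃ = V_n` holds with probability at least
      -- `1 − c₁c₂ n^{−τ}` for `ε_n` defined by `a ε_n^{1+ν}/8 = 2δ_n`
      (∀ εn : ℝ,
        a * εn ^ (1 + ν) / 8
            = 2 * ((1 + τ) * Real.log n / (c₁ * n)) ^ ((mstar : ℝ)⁻¹) →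
        1 - ENNReal.ofReal (c₁ * c₂ * (n : ℝ) ^ (-τ)) ≤
          Measure.pi (fun _ : Fin n => μ)
            {u : Fin n → M | ∀ x : M, ∃ i, dist x (u i) ≤ a * εn ^ (1 + ν) / 8}) := by
  intro τ hτ
  have hm₀ : mstar ≠ 0 := by omega
  obtain ⟨N₀, hN₀⟩ := eventually_atTop.mp <| eventually_one_le_log_and_rpow_le hc₁ hτ
    (inv_pos.mpr (Nat.cast_pos.mpr (Nat.pos_of_ne_zero hm₀))) hδ₀
  refine ⟨N₀, fun n hn => ?_⟩
  obtain ⟨hlog, hδδ₀⟩ := hN₀ n hn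
  set L := (1 + τ) * Real.log n / (c₁ * n)
  have hL : 0 < L :=
    div_pos (by linarith) (mul_pos hc₁ (natCast_pos_of_one_le_mul_log hlog))
  have hδ : 0 < L ^ (mstar : ℝ)⁻¹ := Real.rpow_pos_of_pos hL _
  have hδm : (L ^ (mstar : ℝ)⁻¹) ^ mstar = L := Real.rpow_inv_natCast_pow hL.le hm₀
  obtain ⟨S, hScard, hS⟩ := hnet _ hδ hδδ₀
  rw [Real.rpow_neg hδ.le, Real.rpow_natCast, hδm] at hScard
  have hfar := measure_pi_exists_far_le (ι := Fin n) (by positivity)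
    (fun x => hδm ▸ hball _ hδ hδδ₀ x) hS
  rw [Fintype.card_fin] at hfar
  have hmain := hfar.trans (ENNReal.ofReal_le_ofReal
    (mul_exp_le_rpow_neg hc₁ hc₂.le hlog hScard))
  refine ⟨hmain, fun εn hε => ?_⟩
  rw [hε]
  refine one_sub_le_measure_of_measure_compl_le ((measure_mono fun u hu => ?_).trans hmain)
  simpa using hu

/-- **Quantitative coverage probability** (Lemma 5.2, coverage part,
metric-measure form): if `μ(B(x,δ)) ≥ c₁δ^{m*}` for all `x` and small `δ`, and `M`
admits `δ`-nets of cardinality at most `c₂δ^{−m*}`, then for every `τ > 0` there is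
`n(τ)` such that for all `n ≥ n(τ)`, with
`δ_n = ((1+τ) log n / (c₁ n))^{1/m*}`, the probability that `n` i.i.d. samples fail
to be a `2δ_n`-cover of `M` is at most `c₁c₂ n^{−τ}`. In particular, for `ε_n`
defined by `a ε_n^{1+ν}/8 = 2δ_n`, assumption (H15) holds with probability at least
`1 − c₁c₂ n^{−τ}`. -/
theorem quantitative_coverage_probability
    {M : Type*} [MetricSpace M] [CompactSpace M]
    [MeasurableSpace M] [BorelSpace M]
    (μ : Measure M) [IsProbabilityMeasure μ]
    (mstar : ℕ) (hm : 1 ≤ mstar)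
    (c₁ c₂ δ₀ : ℝ) (hc₁ : 0 < c₁) (hc₂ : 0 < c₂) (hδ₀ : 0 < δ₀)
    -- (i) small balls have measure at least `c₁ δ^{m*}`
    (hball : ∀ δ : ℝ, 0 < δ → δ ≤ δ₀ → ∀ x : M,
      ENNReal.ofReal (c₁ * δ ^ mstar) ≤ μ (Metric.closedBall x δ))
    -- (ii) `M` admits `δ`-nets of cardinality at most `c₂ δ^{−m*}`
    (hnet : ∀ δ : ℝ, 0 < δ → δ ≤ δ₀ → ∃ S : Finset M,
      (S.card : ℝ) ≤ c₂ * δ ^ (-(mstar : ℝ)) ∧ ∀ x : M, ∃ j ∈ S, dist x j ≤ δ)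
    (a ν : ℝ) (ha : 0 < a) (hν : 0 < ν) :
    ∀ τ : ℝ, 0 < τ → ∃ N₀ : ℕ, ∀ n : ℕ, N₀ ≤ n →
      (Measure.pi (fun _ : Fin n => μ)
          {u : Fin n → M | ∃ x : M, ∀ i,
            2 * ((1 + τ) * Real.log n / (c₁ * n)) ^ ((mstar : ℝ)⁻¹) < dist x (u i)}
        ≤ ENNReal.ofReal (c₁ * c₂ * (n : ℝ) ^ (-τ))) ∧
      -- in particular, (H15) with `M̃ = V_n` holds with probability at least
      -- `1 − c₁c₂ n^{−τ}` for `ε_n` defined by `a ε_n^{1+ν}/8 = 2δ_n`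
      (∀ εn : ℝ,
        a * εn ^ (1 + ν) / 8
            = 2 * ((1 + τ) * Real.log n / (c₁ * n)) ^ ((mstar : ℝ)⁻¹) →
        1 - ENNReal.ofReal (c₁ * c₂ * (n : ℝ) ^ (-τ)) ≤
          Measure.pi (fun _ : Fin n => μ)
            {u : Fin n → M | ∀ x : M, ∃ i, dist x (u i) ≤ a * εn ^ (1 + ν) / 8}) :=
  quantitative_coverage_probability_general μ mstar hm c₁ c₂ δ₀ hc₁ hc₂ hδ₀ hball hnet a ν
end
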